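/- Let F have characteristic 2, (V, *) an anticommutative F-algebra (u*u = 0 for all u) and φ : V × V → F a bilinear form. The algebra A(V,*,φ) on F ⊕ V with multiplication (α1+u)(β1+v) = (αβ + φ(u,v))·1 + (αv + βu + u*v) is a Vidinli algebra with norm q(α1+u) = α² + φ(u,u): it is unital, satisfies x² = q(x)·1 for all x, and all commutators lie in F·1. -/

import Mathlib

/-- The multiplication of the unital algebra `A(V,*,φ)` on `F ⊕ V`:
`(α1+u)(β1+v) = (αβ + φ(u,v))·1 + (αv + βu + u*v)`. -/
def amul {F V : Type*} [Field F] [AddCommGroup V] [Module F V]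
    (φ : V →ₗ[F] V →ₗ[F] F) (m : V →ₗ[F] V →ₗ[F] V) (x y : F × V) : F × V :=
  (x.1 * y.1 + φ x.2 y.2, x.1 • y.2 + y.1 • x.2 + m x.2 y.2)

theorem add_self_eq_zero_of_two_eq_zero {R M : Type*} [Semiring R] [AddCommMonoid M]
    [Module R M] (h2 : (2 : R) = 0) (v : M) : v + v = 0 := by
  rw [← two_smul R, h2, zero_smul]

section Amul

variable {F V : Type*} [Field F] [AddCommGroup V] [Module F V]
  (φ : V →ₗ[F] V →ₗ[F] F)

theorem amul_one_left (m : V →ₗ[F] V →ₗ[F] V) (x : F × V) : amul φ m (1, 0) x = x := by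
  simp [amul]

theorem amul_one_right (m : V →ₗ[F] V →ₗ[F] V) (x : F × V) : amul φ m x (1, 0) = x := by
  simp [amul]

theorem amul_self {m : V →ₗ[F] V →ₗ[F] V} (h2 : (2 : F) = 0) (hm : m.IsAlt) (x : F × V) :
    amul φ m x x = (x.1 ^ 2 + φ x.2 x.2) • ((1, 0) : F × V) := by
  simp [amul, sq, hm.self_eq_zero, add_self_eq_zero_of_two_eq_zero h2]

-- Anticommutativity turns `u*v - v*u` into `2 (u*v)`, which vanishes in characteristic `2`.
theorem amul_sub_amul_swap {m : V →ₗ[F] V →ₗ[F] V} (h2 : (2 : F) = 0) (hm : m.IsAlt)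
    (x y : F × V) :
    amul φ m x y - amul φ m y x = (φ x.2 y.2 - φ y.2 x.2) • ((1, 0) : F × V) := by
  have hvec : m x.2 y.2 - m y.2 x.2 = 0 := by
    rw [← hm.neg x.2 y.2, sub_neg_eq_add, add_self_eq_zero_of_two_eq_zero h2]
  ext
  · simp only [amul, Prod.fst_sub, Prod.smul_fst, smul_eq_mul, mul_one]
    ring
  · simp only [amul, Prod.snd_sub, Prod.smul_snd, smul_zero]
    rw [← hvec]
    abel

end Amul

theorem stmt17 {F V : Type*} [Field F] [AddCommGroup V] [Module F V]
    (hchar : (2 : F) = 0)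
    (m : V →ₗ[F] V →ₗ[F] V) (hm : ∀ u : V, m u u = 0)
    (φ : V →ₗ[F] V →ₗ[F] F) :
    (∀ x : F × V, amul φ m (1, 0) x = x ∧ amul φ m x (1, 0) = x) ∧
    ((fun x : F × V => x.1 ^ 2 + φ x.2 x.2) ((1, 0) : F × V) = 1) ∧
    (∀ x : F × V, amul φ m x x = (x.1 ^ 2 + φ x.2 x.2) • ((1, 0) : F × V)) ∧
    (∀ x y : F × V, ∃ c : F,
      amul φ m x y - amul φ m y x = c • ((1, 0) : F × V)) :=
  ⟨fun x => ⟨amul_one_left φ m x, amul_one_right φ m x⟩, by simp,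
    amul_self φ hchar hm, fun x y => ⟨_, amul_sub_amul_swap φ hchar hm x y⟩⟩
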